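/- Suppose f(x) = Σ_{n≥0} a_n g_n(x) converges absolutely on [c₁,c₂] with x₀ ∈ (c₁,c₂). Then for any shift point s ∈ (x₀,c₂), one has f(x) = Σ_{k≥0} ( (1/k!) Σ_{n≥k} a_n · n!/(n−k)! · g_{n−k}(s) ) · g_{s,k}(x) for all x ∈ [s,c₂], with absolute convergence; the analogous statement holds for s ∈ (c₁,x₀) on [c₁,s]. -/

import Mathlib

open MeasureTheory Set Finset

/-- The jump of `g` at `x`: `Δg(x) = g(x⁺) − g(x)`. -/
noncomputable def jumpOf (g : ℝ → ℝ) (x : ℝ) : ℝ := Function.rightLim g x - g x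

/-- Oriented Lebesgue–Stieltjes integral: `∫_a^b f dμ = ∫_{[a,b)} f dμ` if `a ≤ b`,
`= −∫_{[b,a)} f dμ` otherwise. -/
noncomputable def ointeg (μ : MeasureTheory.Measure ℝ) (f : ℝ → ℝ) (a b : ℝ) : ℝ :=
  if a ≤ b then ∫ s in Set.Ico a b, f s ∂μ else - ∫ s in Set.Ico b a, f s ∂μ

/-- The `g`-monomials centered at `c`, defined from the Lebesgue–Stieltjes measure `μ` of `g`:
`g_0 ≡ 1`, `g_{n+1}(x) = (n+1) ∫_c^x g_n dμ` (oriented). -/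
noncomputable def gMon (μ : MeasureTheory.Measure ℝ) (c : ℝ) : ℕ → ℝ → ℝ
  | 0 => fun _ => 1
  | n + 1 => fun x => ((n : ℝ) + 1) * ointeg μ (gMon μ c n) c x


/-- The shifted coefficients `(1/k!) Σ_{n≥k} aₙ · n!/(n−k)! · g_{n−k}(s)` appearing when
recentering a `g`-monomial series at `s`. -/
noncomputable def coefShift {𝕜 : Type*} [RCLike 𝕜] (μ : MeasureTheory.Measure ℝ)
    (x₀ : ℝ) (a : ℕ → 𝕜) (s : ℝ) (k : ℕ) : 𝕜 :=
  (((Nat.factorial k : ℝ)⁻¹ : ℝ) : 𝕜) *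
    ∑' n : ℕ, a (n + k) * (((Nat.factorial (n + k) : ℝ) / (Nat.factorial n : ℝ) : ℝ) : 𝕜) *
      ((gMon μ x₀ n s : ℝ) : 𝕜)

/-!
By induction from the recursion and the additivity of the oriented integral in its endpoints,
the `g`-monomials satisfy the binomial identity
`g_{x₀,n}(x) = ∑_{k+m=n} C(n,k) g_{s,k}(x) g_{x₀,m}(s)`. Since `g_{c,n}(x)` has the sign of
`(x - c)ⁿ`, all terms of this identity have the same sign when `s` lies between `x₀` and `x`, so the
double series `∑_{k,m} C(k+m,k) a_{k+m} g_{s,k}(x) g_{x₀,m}(s)` converges absolutely and can be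
summed either by antidiagonals or by columns.
-/

namespace MeasureTheory.LocallyIntegrable

variable {μ : Measure ℝ} {f : ℝ → ℝ}

theorem integrableOn_Ico (hf : LocallyIntegrable f μ) (a b : ℝ) :
    IntegrableOn f (Ico a b) μ :=
  (hf.integrableOn_isCompact isCompact_Icc).mono_set Ico_subset_Icc_self

theorem abs (hf : LocallyIntegrable f μ) : LocallyIntegrable (fun x => |f x|) μ :=
  locallyIntegrableOn_univ.mp ((hf.locallyIntegrableOn univ).norm)

end MeasureTheory.LocallyIntegrable

theorem isLocallyFiniteMeasure_of_measure_Ico_ne_top {μ : Measure ℝ}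
    (h : ∀ a b, μ (Ico a b) ≠ ⊤) : IsLocallyFiniteMeasure μ :=
  ⟨fun x => ⟨Ico (x - 1) (x + 1), Ico_mem_nhds (by linarith) (by linarith), (h _ _).lt_top⟩⟩

section OrientedIntegral

variable {μ : Measure ℝ} {f g : ℝ → ℝ} {a b c : ℝ}

theorem ointeg_of_le (hab : a ≤ b) : ointeg μ f a b = ∫ x in Ico a b, f x ∂μ :=
  if_pos hab

theorem ointeg_of_ge (hba : b ≤ a) : ointeg μ f a b = -∫ x in Ico b a, f x ∂μ := by
  rcases hba.eq_or_lt with rfl | hlt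
  · simp [ointeg]
  · exact if_neg hlt.not_ge

theorem ointeg_eq_sub (f : ℝ → ℝ) (a b : ℝ) :
    ointeg μ f a b = ∫ x in Ico a b, f x ∂μ - ∫ x in Ico b a, f x ∂μ := by
  rcases le_total a b with h | h
  · rw [ointeg_of_le h, Ico_eq_empty_of_le h, Measure.restrict_empty, integral_zero_measure,
      sub_zero]
  · rw [ointeg_of_ge h, Ico_eq_empty_of_le h, Measure.restrict_empty, integral_zero_measure,
      zero_sub]

theorem ointeg_sub (hf : LocallyIntegrable f μ) (hg : LocallyIntegrable g μ) (a b : ℝ) :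
    ointeg μ (fun x => f x - g x) a b = ointeg μ f a b - ointeg μ g a b := by
  simp only [ointeg_eq_sub, integral_sub (hf.integrableOn_Ico _ _) (hg.integrableOn_Ico _ _)]
  ring

theorem ointeg_const_mul (r : ℝ) (f : ℝ → ℝ) (a b : ℝ) :
    ointeg μ (fun x => r * f x) a b = r * ointeg μ f a b := by
  simp only [ointeg_eq_sub, integral_const_mul]
  ring

theorem ointeg_finsetSum {ι : Type*} (s : Finset ι) {f : ι → ℝ → ℝ}
    (hf : ∀ i ∈ s, LocallyIntegrable (f i) μ) (a b : ℝ) :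
    ointeg μ (fun x => ∑ i ∈ s, f i x) a b = ∑ i ∈ s, ointeg μ (f i) a b := by
  simp only [ointeg_eq_sub, sum_sub_distrib]
  rw [integral_finsetSum _ fun i hi => (hf i hi).integrableOn_Ico _ _,
    integral_finsetSum _ fun i hi => (hf i hi).integrableOn_Ico _ _]

theorem setIntegral_Ico_add_Ico (hf : LocallyIntegrable f μ) (hab : a ≤ b) (hbc : b ≤ c) :
    ∫ x in Ico a b, f x ∂μ + ∫ x in Ico b c, f x ∂μ = ∫ x in Ico a c, f x ∂μ := by
  rw [← Ico_union_Ico_eq_Ico hab hbc, setIntegral_union Ico_disjoint_Ico_same measurableSet_Ico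
    (hf.integrableOn_Ico _ _) (hf.integrableOn_Ico _ _)]

theorem ointeg_eq_sub_ointeg (hf : LocallyIntegrable f μ) {m : ℝ} (hma : m ≤ a) (hmb : m ≤ b) :
    ointeg μ f a b = ointeg μ f m b - ointeg μ f m a := by
  rw [ointeg_of_le hma, ointeg_of_le hmb]
  rcases le_total a b with h | h
  · rw [ointeg_of_le h, ← setIntegral_Ico_add_Ico hf hma h]
    ring
  · rw [ointeg_of_ge h, ← setIntegral_Ico_add_Ico hf hmb h]
    ring

theorem ointeg_add_ointeg (hf : LocallyIntegrable f μ) (a b c : ℝ) :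
    ointeg μ f a b + ointeg μ f b c = ointeg μ f a c := by
  have ha : min a (min b c) ≤ a := min_le_left _ _
  have hb : min a (min b c) ≤ b := (min_le_right _ _).trans (min_le_left _ _)
  have hc : min a (min b c) ≤ c := (min_le_right _ _).trans (min_le_right _ _)
  rw [ointeg_eq_sub_ointeg hf ha hb, ointeg_eq_sub_ointeg hf hb hc, ointeg_eq_sub_ointeg hf ha hc]
  ring

theorem monotone_ointeg (hf : LocallyIntegrable f μ) (hf₀ : ∀ x, 0 ≤ f x) (c : ℝ) :
    Monotone (ointeg μ f c) := fun x y hxy => by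
  rw [← ointeg_add_ointeg hf c x y, ointeg_of_le hxy, le_add_iff_nonneg_right]
  exact setIntegral_nonneg measurableSet_Ico fun t _ => hf₀ t

/-- An oriented primitive of a signed function is a difference of monotone ones. -/
theorem locallyIntegrable_ointeg [IsLocallyFiniteMeasure μ] (hf : LocallyIntegrable f μ)
    (c : ℝ) : LocallyIntegrable (ointeg μ f c) μ := by
  have hsplit : ointeg μ f c = ointeg μ (fun x => |f x|) c - ointeg μ (fun x => |f x| - f x) c := by
    funext x
    rw [Pi.sub_apply, ointeg_sub hf.abs hf, sub_sub_cancel]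
  rw [hsplit]
  exact (monotone_ointeg hf.abs (fun _ => abs_nonneg _) c).locallyIntegrable.sub
    (monotone_ointeg (hf.abs.sub hf) (fun _ => sub_nonneg.2 (le_abs_self _)) c).locallyIntegrable

end OrientedIntegral

section Monomials

variable {μ : Measure ℝ} {c s x : ℝ}

theorem gMon_succ (μ : Measure ℝ) (c : ℝ) (n : ℕ) (x : ℝ) :
    gMon μ c (n + 1) x = ((n : ℝ) + 1) * ointeg μ (gMon μ c n) c x := rfl

theorem gMon_nonneg (hcx : c ≤ x) (n : ℕ) : 0 ≤ gMon μ c n x := by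
  induction n generalizing x with
  | zero => exact zero_le_one
  | succ n ih =>
    rw [gMon_succ, ointeg_of_le hcx]
    exact mul_nonneg (by positivity)
      (setIntegral_nonneg measurableSet_Ico fun t ht => ih ht.1)

theorem neg_one_pow_mul_gMon_nonneg (hxc : x ≤ c) (n : ℕ) : 0 ≤ (-1) ^ n * gMon μ c n x := by
  induction n generalizing x with
  | zero => simp [gMon]
  | succ n ih =>
    have h : (-1) ^ (n + 1) * gMon μ c (n + 1) x
        = ((n : ℝ) + 1) * ∫ t in Ico x c, (-1) ^ n * gMon μ c n t ∂μ := by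
      rw [gMon_succ, ointeg_of_ge hxc, integral_const_mul, pow_succ]
      ring
    rw [h]
    exact mul_nonneg (by positivity)
      (setIntegral_nonneg measurableSet_Ico fun t ht => ih (ht.2.le))

theorem abs_gMon_of_le (hcx : c ≤ x) (n : ℕ) : |gMon μ c n x| = gMon μ c n x :=
  abs_of_nonneg (gMon_nonneg hcx n)

theorem abs_gMon_of_ge (hxc : x ≤ c) (n : ℕ) : |gMon μ c n x| = (-1) ^ n * gMon μ c n x := by
  rw [← abs_of_nonneg (neg_one_pow_mul_gMon_nonneg hxc n), abs_mul, abs_neg_one_pow, one_mul]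

theorem locallyIntegrable_gMon [IsLocallyFiniteMeasure μ] (c : ℝ) (n : ℕ) :
    LocallyIntegrable (gMon μ c n) μ := by
  induction n with
  | zero => exact locallyIntegrable_const 1
  | succ n ih => exact (locallyIntegrable_ointeg ih c).smul ((n : ℝ) + 1)

theorem gMon_eq_sum_antidiagonal [IsLocallyFiniteMeasure μ] (c s : ℝ) (n : ℕ) (x : ℝ) :
    gMon μ c n x = ∑ p ∈ antidiagonal n, (n.choose p.1 : ℝ) * gMon μ s p.1 x * gMon μ c p.2 s := by
  induction n generalizing x with
  | zero => simp [gMon]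
  | succ n ih =>
    have hint : ointeg μ (gMon μ c n) s x = ∑ p ∈ antidiagonal n,
        (n.choose p.1 : ℝ) * gMon μ c p.2 s * ointeg μ (gMon μ s p.1) s x := by
      have hfun : gMon μ c n = fun t => ∑ p ∈ antidiagonal n,
          (n.choose p.1 : ℝ) * gMon μ c p.2 s * gMon μ s p.1 t :=
        funext fun t => (ih t).trans (sum_congr rfl fun p _ => by ring)
      rw [hfun, ointeg_finsetSum _ fun p _ =>
        (locallyIntegrable_gMon s p.1).smul ((n.choose p.1 : ℝ) * gMon μ c p.2 s)]
      exact sum_congr rfl fun p _ => ointeg_const_mul _ _ _ _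
    have hstep : ∀ p : ℕ × ℕ, ((n : ℝ) + 1) * ((n.choose p.1 : ℝ) * gMon μ c p.2 s *
        ointeg μ (gMon μ s p.1) s x)
          = ((n + 1).choose (p.1 + 1) : ℝ) * gMon μ s (p.1 + 1) x * gMon μ c p.2 s := by
      intro p
      have hchoose := congrArg (Nat.cast (R := ℝ)) (Nat.add_one_mul_choose_eq n p.1)
      push_cast at hchoose
      rw [gMon_succ]
      linear_combination (gMon μ c p.2 s * ointeg μ (gMon μ s p.1) s x) * hchoose
    rw [gMon_succ, ← ointeg_add_ointeg (locallyIntegrable_gMon c n) c s x, mul_add, ← gMon_succ,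
      hint, mul_sum, sum_congr rfl fun p _ => hstep p, Nat.sum_antidiagonal_succ]
    simp [gMon]

end Monomials

section Antidiagonal

theorem summable_of_summable_sum_antidiagonal_of_nonneg {f : ℕ × ℕ → ℝ} (hf : 0 ≤ f)
    (h : Summable fun n => ∑ p ∈ antidiagonal n, f p) : Summable f := by
  rw [← HasAntidiagonal.sigmaAntidiagonalEquivProd.summable_iff]
  exact (summable_sigma_of_nonneg fun _ => hf _).mpr
    ⟨fun _ => .of_finite, h.congr fun n => (Finset.tsum_subtype _ _).symm⟩

theorem HasSum.sum_antidiagonal {E : Type*} [NormedAddCommGroup E] {f : ℕ × ℕ → E} {e : E}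
    (h : HasSum f e) : HasSum (fun n => ∑ p ∈ antidiagonal n, f p) e :=
  (HasAntidiagonal.sigmaAntidiagonalEquivProd.hasSum_iff.mpr h).sigma fun _ =>
    (Finset.sum_subtype _ (fun _ => Iff.rfl) f).symm ▸ hasSum_fintype _

end Antidiagonal

theorem summable_and_hasSum_of_binomial_expansion {𝕜 : Type*} [RCLike 𝕜] (a b : ℕ → 𝕜)
    (u v w : ℕ → ℝ)
    (hw : ∀ n, w n = ∑ p ∈ antidiagonal n, (n.choose p.1 : ℝ) * v p.1 * u p.2)
    (habs_w : ∀ n, |w n| = ∑ p ∈ antidiagonal n, (n.choose p.1 : ℝ) * |v p.1| * |u p.2|)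
    (hb : ∀ k, b k = ∑' m, ((k + m).choose k : 𝕜) * a (k + m) * (u m : 𝕜))
    (hsum : Summable fun n => ‖a n‖ * |w n|) :
    Summable (fun k => ‖b k‖ * |v k|) ∧
      HasSum (fun k => b k * (v k : 𝕜)) (∑' n, a n * (w n : 𝕜)) := by
  set S : ℕ × ℕ → 𝕜 := fun p =>
    ((p.1 + p.2).choose p.1 : 𝕜) * a (p.1 + p.2) * (u p.2 : 𝕜) * (v p.1 : 𝕜) with hS
  have hS_norm : Summable fun p => ‖S p‖ := by
    refine summable_of_summable_sum_antidiagonal_of_nonneg (fun _ => norm_nonneg _)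
      (hsum.congr fun n => ?_)
    rw [habs_w, mul_sum]
    refine sum_congr rfl fun p hp => ?_
    simp only [hS, mem_antidiagonal.mp hp, norm_mul, RCLike.norm_natCast, RCLike.norm_ofReal]
    ring
  have hS_sum : HasSum S (∑' n, a n * (w n : 𝕜)) := by
    have h := hS_norm.of_norm.hasSum.sum_antidiagonal
    have hdiag : ∀ n, ∑ p ∈ antidiagonal n, S p = a n * (w n : 𝕜) := fun n => by
      rw [hw, RCLike.ofReal_sum, mul_sum]
      refine sum_congr rfl fun p hp => ?_
      simp only [hS, mem_antidiagonal.mp hp]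
      push_cast
      ring
    simp only [hdiag] at h
    exact h.tsum_eq ▸ hS_norm.of_norm.hasSum
  have hcol : ∀ k, HasSum (fun m => S (k, m)) (b k * (v k : 𝕜)) := fun k => by
    rw [hb, ← tsum_mul_right]
    exact (hS_sum.summable.prod_factor k).hasSum
  refine ⟨?_, hS_sum.prod_fiberwise hcol⟩
  refine .of_nonneg_of_le (fun _ => by positivity) (fun k => ?_)
    ((summable_prod_of_nonneg fun _ => norm_nonneg _).mp hS_norm).2
  rw [← RCLike.norm_ofReal (K := 𝕜), ← norm_mul, ← (hcol k).tsum_eq]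
  exact norm_tsum_le_tsum_norm (hS_norm.prod_factor k)

theorem coefShift_eq_tsum_choose {𝕜 : Type*} [RCLike 𝕜] (μ : Measure ℝ) (x₀ : ℝ) (a : ℕ → 𝕜)
    (s : ℝ) (k : ℕ) :
    coefShift μ x₀ a s k = ∑' m, ((k + m).choose k : 𝕜) * a (k + m) * (gMon μ x₀ m s : 𝕜) := by
  rw [coefShift, ← tsum_mul_left]
  refine tsum_congr fun m => ?_
  have hchoose :
      ((k + m).choose k : ℝ) = (k.factorial : ℝ)⁻¹ * ((k + m).factorial / m.factorial) := by
    rw [Nat.cast_choose ℝ (Nat.le_add_right k m), Nat.add_sub_cancel_left]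
    field_simp
  rw [add_comm m k, ← RCLike.ofReal_natCast (K := 𝕜), hchoose]
  push_cast
  ring

theorem summable_and_hasSum_gMon_recenter {𝕜 : Type*} [RCLike 𝕜] {μ : Measure ℝ}
    [IsLocallyFiniteMeasure μ] {x₀ s x : ℝ} (hs : x₀ ≤ s ∧ s ≤ x ∨ x ≤ s ∧ s ≤ x₀) (a : ℕ → 𝕜)
    (hsum : Summable fun n => ‖a n‖ * |gMon μ x₀ n x|) :
    Summable (fun k => ‖coefShift μ x₀ a s k‖ * |gMon μ s k x|) ∧
      HasSum (fun k => coefShift μ x₀ a s k * (gMon μ s k x : 𝕜))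
        (∑' n, a n * (gMon μ x₀ n x : 𝕜)) := by
  obtain ⟨ε, hε⟩ : ∃ ε : ℝ, ∀ n, |gMon μ x₀ n s| = ε ^ n * gMon μ x₀ n s ∧
      |gMon μ s n x| = ε ^ n * gMon μ s n x ∧ |gMon μ x₀ n x| = ε ^ n * gMon μ x₀ n x := by
    rcases hs with ⟨h₁, h₂⟩ | ⟨h₁, h₂⟩
    · refine ⟨1, fun n => ?_⟩
      simp only [one_pow, one_mul, abs_gMon_of_le h₁, abs_gMon_of_le h₂,
        abs_gMon_of_le (h₁.trans h₂), and_self]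
    · exact ⟨-1, fun n => ⟨abs_gMon_of_ge h₂ n, abs_gMon_of_ge h₁ n,
        abs_gMon_of_ge (h₁.trans h₂) n⟩⟩
  refine summable_and_hasSum_of_binomial_expansion a _ (gMon μ x₀ · s) (gMon μ s · x)
    (gMon μ x₀ · x) (gMon_eq_sum_antidiagonal x₀ s · x) (fun n => ?_)
    (coefShift_eq_tsum_choose μ x₀ a s) hsum
  rw [(hε n).2.2, gMon_eq_sum_antidiagonal x₀ s n x, mul_sum]
  refine sum_congr rfl fun p hp => ?_
  rw [(hε p.1).2.1, (hε p.2).1, ← mem_antidiagonal.mp hp, pow_add]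
  ring

theorem stmt15_general {𝕜 : Type*} [RCLike 𝕜] (g : ℝ → ℝ) (μ : MeasureTheory.Measure ℝ)
    (hμ : ∀ a b : ℝ, a ≤ b → μ (Set.Ico a b) = ENNReal.ofReal (g b - g a))
    (x₀ c₁ c₂ : ℝ) (hx₀ : x₀ ∈ Set.Ioo c₁ c₂) (a : ℕ → 𝕜)
    (habs : ∀ x ∈ Set.Icc c₁ c₂, Summable (fun n : ℕ => ‖a n‖ * |gMon μ x₀ n x|)) :
    ∀ s : ℝ,
      (s ∈ Set.Ioo x₀ c₂ → ∀ x ∈ Set.Icc s c₂,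
        Summable (fun k : ℕ => ‖coefShift μ x₀ a s k‖ * |gMon μ s k x|) ∧
        HasSum (fun k : ℕ => coefShift μ x₀ a s k * ((gMon μ s k x : ℝ) : 𝕜))
          (∑' n : ℕ, a n * ((gMon μ x₀ n x : ℝ) : 𝕜))) ∧
      (s ∈ Set.Ioo c₁ x₀ → ∀ x ∈ Set.Icc c₁ s,
        Summable (fun k : ℕ => ‖coefShift μ x₀ a s k‖ * |gMon μ s k x|) ∧
        HasSum (fun k : ℕ => coefShift μ x₀ a s k * ((gMon μ s k x : ℝ) : 𝕜))
          (∑' n : ℕ, a n * ((gMon μ x₀ n x : ℝ) : 𝕜))) := by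
  have : IsLocallyFiniteMeasure μ := isLocallyFiniteMeasure_of_measure_Ico_ne_top fun p q => by
    rcases le_total p q with h | h
    · exact hμ p q h ▸ ENNReal.ofReal_ne_top
    · simp [Ico_eq_empty_of_le h]
  refine fun s => ⟨fun hs x hx => ?_, fun hs x hx => ?_⟩
  · exact summable_and_hasSum_gMon_recenter (.inl ⟨hs.1.le, hx.1⟩) a
      (habs x ⟨hx₀.1.le.trans (hs.1.le.trans hx.1), hx.2⟩)
  · exact summable_and_hasSum_gMon_recenter (.inr ⟨hx.2, hs.2.le⟩) a
      (habs x ⟨hx.1, hx.2.trans (hs.2.le.trans hx₀.2.le)⟩)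

/-- Change of center for `g`-monomial series: if `Σ aₙ gₙ(x)` converges absolutely on
`[c₁,c₂] ∋ x₀`, then for `s ∈ (x₀,c₂)` (resp. `s ∈ (c₁,x₀)`) the recentered series with
coefficients `coefShift` converges absolutely on `[s,c₂]` (resp. `[c₁,s]`) and sums to
`f(x) = Σ aₙ gₙ(x)` there. -/
theorem stmt15 {𝕜 : Type*} [RCLike 𝕜] (g : ℝ → ℝ) (μ : MeasureTheory.Measure ℝ)
    (hg : Monotone g) (hlc : ∀ x : ℝ, ContinuousWithinAt g (Set.Iio x) x)
    (hμ : ∀ a b : ℝ, a ≤ b → μ (Set.Ico a b) = ENNReal.ofReal (g b - g a))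
    (x₀ c₁ c₂ : ℝ) (hx₀ : x₀ ∈ Set.Ioo c₁ c₂) (a : ℕ → 𝕜)
    (habs : ∀ x ∈ Set.Icc c₁ c₂, Summable (fun n : ℕ => ‖a n‖ * |gMon μ x₀ n x|)) :
    ∀ s : ℝ,
      (s ∈ Set.Ioo x₀ c₂ → ∀ x ∈ Set.Icc s c₂,
        Summable (fun k : ℕ => ‖coefShift μ x₀ a s k‖ * |gMon μ s k x|) ∧
        HasSum (fun k : ℕ => coefShift μ x₀ a s k * ((gMon μ s k x : ℝ) : 𝕜))
          (∑' n : ℕ, a n * ((gMon μ x₀ n x : ℝ) : 𝕜))) ∧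
      (s ∈ Set.Ioo c₁ x₀ → ∀ x ∈ Set.Icc c₁ s,
        Summable (fun k : ℕ => ‖coefShift μ x₀ a s k‖ * |gMon μ s k x|) ∧
        HasSum (fun k : ℕ => coefShift μ x₀ a s k * ((gMon μ s k x : ℝ) : 𝕜))
          (∑' n : ℕ, a n * ((gMon μ x₀ n x : ℝ) : 𝕜))) :=
  stmt15_general g μ hμ x₀ c₁ c₂ hx₀ a habs
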